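/- The POVMs A_1 = {(1/2)(I−|i⟩⟨i|)}_{i=1,2,3} and A_2 = {(1/2)|φ⟩⟨φ|, I − (1/2)|φ⟩⟨φ|} on ℂ³, with |φ⟩ = (1/√3)(|1⟩+|2⟩+|3⟩), are not jointly measurable. -/

import Mathlib

open Matrix ComplexOrder

/-- The computational basis vector `|i⟩` of ℂ³. -/
def e (i : Fin 3) : Fin 3 → ℂ := fun j => if j = i then 1 else 0

/-- The vector `|φ⟩ = (1/√3)(|1⟩ + |2⟩ + |3⟩)`. -/
noncomputable def φ : Fin 3 → ℂ := fun _ => 1 / (Real.sqrt 3 : ℂ)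

/-- Rank-one projector `|v⟩⟨v|` as a matrix. -/
noncomputable def proj (v : Fin 3 → ℂ) : Matrix (Fin 3) (Fin 3) ℂ :=
  Matrix.vecMulVec v (star v)

/-- The POVM `A₁(i) = (1/2)(I − |i⟩⟨i|)`. -/
noncomputable def A1 (i : Fin 3) : Matrix (Fin 3) (Fin 3) ℂ :=
  (1 / 2 : ℂ) • ((1 : Matrix (Fin 3) (Fin 3) ℂ) - proj (e i))

/-- The POVM `A₂ = {(1/2)|φ⟩⟨φ|, I − (1/2)|φ⟩⟨φ|}`. -/
noncomputable def A2 : Fin 2 → Matrix (Fin 3) (Fin 3) ℂ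
  | 0 => (1 / 2 : ℂ) • proj φ
  | 1 => 1 - (1 / 2 : ℂ) • proj φ

/-!
Suppose `G`, `D1`, `D2` were a joint measurement. Since each `A1 i` and `A2 0` is a nonnegative
combination of the positive semidefinite `G λ`, any vector it annihilates is annihilated by every
`G λ` entering with positive weight. Every `λ` has some `i` with `D1 λ i > 0`, so `G λ` kills
`|i⟩`; if moreover `D2 λ 0 > 0`, then `G λ` also kills `φ^⊥`. As `|i⟩ ∉ φ^⊥`, these span `ℂ³`
and `G λ = 0`. Hence `A2 0 = ∑ λ, D2 λ 0 • G λ = 0`, which is absurd.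
-/

namespace Matrix

variable {n : Type*} [Fintype n]

theorem eq_zero_of_mulVec_eq_zero_of_forall_dotProduct_eq_zero {K : Type*} [Field K]
    {M : Matrix n n K} {x w : n → K} (hx : M *ᵥ x = 0)
    (hw : ∀ v, w ⬝ᵥ v = 0 → M *ᵥ v = 0) (hwx : w ⬝ᵥ x ≠ 0) : M = 0 := by
  refine ext_iff_mulVec.mpr fun v => ?_
  set t := (w ⬝ᵥ v) / (w ⬝ᵥ x)
  have horth : w ⬝ᵥ (v - t • x) = 0 := by
    rw [dotProduct_sub, dotProduct_smul, smul_eq_mul, div_mul_cancel₀ _ hwx, sub_self]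
  calc M *ᵥ v = M *ᵥ (v - t • x) + t • M *ᵥ x := by
        rw [mulVec_sub, mulVec_smul, sub_add_cancel]
    _ = 0 *ᵥ v := by rw [hw _ horth, hx, smul_zero, add_zero, zero_mulVec]

variable {ι 𝕜 : Type*} [Fintype ι] [RCLike 𝕜]

theorem PosSemidef.mulVec_eq_zero_of_sum_smul_mulVec_eq_zero {G : ι → Matrix n n 𝕜}
    (hG : ∀ l, (G l).PosSemidef) {c : ι → 𝕜} (hc : ∀ l, 0 ≤ c l) {x : n → 𝕜}
    (hx : (∑ l, c l • G l) *ᵥ x = 0) {l : ι} (hl : c l ≠ 0) : G l *ᵥ x = 0 := by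
  have hterms : ∀ k ∈ Finset.univ, 0 ≤ c k * (star x ⬝ᵥ G k *ᵥ x) :=
    fun k _ => mul_nonneg (hc k) ((hG k).dotProduct_mulVec_nonneg x)
  have hsum : ∑ k, c k * (star x ⬝ᵥ G k *ᵥ x) = 0 := by
    simpa [sum_mulVec, dotProduct_sum, smul_mulVec, dotProduct_smul] using
      congrArg (star x ⬝ᵥ ·) hx
  have hquad := (Finset.sum_eq_zero_iff_of_nonneg hterms).mp hsum l (Finset.mem_univ l)
  exact ((hG l).dotProduct_mulVec_zero_iff x).mp ((mul_eq_zero.mp hquad).resolve_left hl)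

end Matrix

theorem proj_mulVec (v x : Fin 3 → ℂ) : proj v *ᵥ x = (star v ⬝ᵥ x) • v := by
  rw [proj, vecMulVec_mulVec, op_smul_eq_smul]

theorem A1_mulVec_e (i : Fin 3) : A1 i *ᵥ e i = 0 := by
  have he : star (e i) ⬝ᵥ e i = 1 := by simp [e, dotProduct]
  rw [A1, smul_mulVec, sub_mulVec, one_mulVec, proj_mulVec, he, one_smul, sub_self, smul_zero]

theorem A2_zero_mulVec_of_dotProduct_eq_zero {v : Fin 3 → ℂ} (hv : star φ ⬝ᵥ v = 0) :
    A2 0 *ᵥ v = 0 := by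
  rw [A2, smul_mulVec, proj_mulVec, hv, zero_smul, smul_zero]

theorem star_φ_dotProduct_e_ne_zero (i : Fin 3) : star φ ⬝ᵥ e i ≠ 0 := by
  simp [φ, e, dotProduct]

theorem A2_zero_ne_zero : A2 0 ≠ 0 := by
  intro h
  have := congrFun (congrFun h 0) 0
  simp [A2, proj, vecMulVec_apply, φ] at this

theorem stmt_15 :
    ¬ ∃ (m : ℕ) (G : Fin m → Matrix (Fin 3) (Fin 3) ℂ)
        (D1 : Fin m → Fin 3 → ℝ) (D2 : Fin m → Fin 2 → ℝ),
      (∀ lam, (G lam).PosSemidef) ∧ (∑ lam, G lam = 1) ∧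
      (∀ lam i, 0 ≤ D1 lam i) ∧ (∀ lam, ∑ i, D1 lam i = 1) ∧
      (∀ lam j, 0 ≤ D2 lam j) ∧ (∀ lam, ∑ j, D2 lam j = 1) ∧
      (∀ i, A1 i = ∑ lam, ((D1 lam i : ℝ) : ℂ) • G lam) ∧
      (∀ j, A2 j = ∑ lam, ((D2 lam j : ℝ) : ℂ) • G lam) := by
  rintro ⟨m, G, D1, D2, hG, -, hD1, hD1sum, hD2, -, hA1, hA2⟩
  have hG_eq_zero : ∀ l, D2 l 0 ≠ 0 → G l = 0 := by
    intro l hl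
    obtain ⟨i, -, hi⟩ := Finset.exists_lt_of_sum_lt (s := Finset.univ) (f := fun _ => 0)
      (g := D1 l) (by simp [hD1sum l])
    refine eq_zero_of_mulVec_eq_zero_of_forall_dotProduct_eq_zero ?_ (fun v hv => ?_)
      (star_φ_dotProduct_e_ne_zero i)
    · refine PosSemidef.mulVec_eq_zero_of_sum_smul_mulVec_eq_zero hG
        (c := fun k => (D1 k i : ℂ)) (fun k => by exact_mod_cast hD1 k i) ?_
        (by exact_mod_cast hi.ne')
      rw [← hA1 i, A1_mulVec_e]
    · refine PosSemidef.mulVec_eq_zero_of_sum_smul_mulVec_eq_zero hG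
        (c := fun k => (D2 k 0 : ℂ)) (fun k => by exact_mod_cast hD2 k 0) ?_
        (by exact_mod_cast hl)
      rw [← hA2 0, A2_zero_mulVec_of_dotProduct_eq_zero hv]
  refine A2_zero_ne_zero ((hA2 0).trans (Finset.sum_eq_zero fun l _ => ?_))
  by_cases hl : D2 l 0 = 0
  · simp [hl]
  · simp [hG_eq_zero l hl]
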